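/- arXiv:2505.23089 — 10 statements merged into one kernel-verified Lean document; each statement's English description precedes it below -/
import Mathlib

section
/- Let (X, G) be a CR-dynamical system and x ∈ X. Then x is an illegal point of (X, G) if and only if there exists a positive integer n such that Gⁿ(x) = ∅. -/
open Set Filter Topology

/-- The n-fold relational composition of `G` (with `G⁰` the diagonal). -/
def relPow {X : Type*} (G : Set (X × X)) : ℕ → Set (X × X)
  | 0 => Set.diagonal X
  | n + 1 => {p : X × X | ∃ z : X, (p.1, z) ∈ relPow G n ∧ (z, p.2) ∈ G}

/-- `s` is a trajectory of `x` in `(X, G)`. -/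
def IsTrajectory {X : Type*} (G : Set (X × X)) (x : X) (s : ℕ → X) : Prop :=
  s 0 = x ∧ ∀ n : ℕ, (s n, s (n + 1)) ∈ G

/-- `x` is a legal point of `(X, G)`. -/
def IsLegal {X : Type*} (G : Set (X × X)) (x : X) : Prop :=
  ∃ s : ℕ → X, IsTrajectory G x s

/-- The set of non-degenerate points of `(X, G)`. -/
def ndDom {X : Type*} (G : Set (X × X)) : Set X := {x : X | ∃ y : X, (x, y) ∈ G}

/-- An entourage of the unique compatible uniformity on a compact Hausdorff space:
a neighbourhood of the diagonal in `X × X`. -/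
def IsEntourage {X : Type*} [TopologicalSpace X] (U : Set (X × X)) : Prop :=
  U ∈ 𝓝ˢ (Set.diagonal X)

/-- `(V,1)`-pseudo-orbit. -/
def IsPO1 {X : Type*} (G V : Set (X × X)) (x : ℕ → X) : Prop :=
  (∀ n : ℕ, x n ∈ ndDom G) ∧ ∀ n : ℕ, ∀ y : X, (x n, y) ∈ G → (y, x (n + 1)) ∈ V

/-- `(V,2)`-pseudo-orbit. -/
def IsPO2 {X : Type*} (G V : Set (X × X)) (x : ℕ → X) : Prop :=
  (∀ n : ℕ, x n ∈ ndDom G) ∧ ∀ n : ℕ, ∃ y : X, (x n, y) ∈ G ∧ (y, x (n + 1)) ∈ V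

/-- The legal point `y` `(U,1)`-shadows the sequence `x`. -/
def Shadows1 {X : Type*} (G U : Set (X × X)) (y : X) (x : ℕ → X) : Prop :=
  IsLegal G y ∧ ∀ s : ℕ → X, IsTrajectory G y s → ∀ n : ℕ, (s n, x n) ∈ U

/-- The point `y` `(U,2)`-shadows the sequence `x`. -/
def Shadows2 {X : Type*} (G U : Set (X × X)) (y : X) (x : ℕ → X) : Prop :=
  ∃ s : ℕ → X, IsTrajectory G y s ∧ ∀ n : ℕ, (s n, x n) ∈ U

/-- The `(1,1)`-shadowing property. -/
def Shadowing11 {X : Type*} [TopologicalSpace X] (G : Set (X × X)) : Prop :=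
  ∀ U : Set (X × X), IsEntourage U → ∃ V : Set (X × X), IsEntourage V ∧
    ∀ x : ℕ → X, IsPO1 G V x → ∃ y : X, Shadows1 G U y x

/-- The `(1,2)`-shadowing property. -/
def Shadowing12 {X : Type*} [TopologicalSpace X] (G : Set (X × X)) : Prop :=
  ∀ U : Set (X × X), IsEntourage U → ∃ V : Set (X × X), IsEntourage V ∧
    ∀ x : ℕ → X, IsPO1 G V x → ∃ y : X, Shadows2 G U y x

/-- The `(2,1)`-shadowing property. -/
def Shadowing21 {X : Type*} [TopologicalSpace X] (G : Set (X × X)) : Prop :=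
  ∀ U : Set (X × X), IsEntourage U → ∃ V : Set (X × X), IsEntourage V ∧
    ∀ x : ℕ → X, IsPO2 G V x → ∃ y : X, Shadows1 G U y x

/-- The `(2,2)`-shadowing property. -/
def Shadowing22 {X : Type*} [TopologicalSpace X] (G : Set (X × X)) : Prop :=
  ∀ U : Set (X × X), IsEntourage U → ∃ V : Set (X × X), IsEntourage V ∧
    ∀ x : ℕ → X, IsPO2 G V x → ∃ y : X, Shadows2 G U y x

/-! If `Gⁿ(x) ≠ ∅` for every `n`, the sequences starting at `x` whose first `n` steps follow `G`
form a decreasing family of nonempty closed subsets of the compact space `X^ℕ`; a point of their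
intersection is a trajectory of `x`. Conversely a trajectory `s` gives `s n ∈ Gⁿ(x)`. -/

def partialTrajectories {X : Type*} (G : Set (X × X)) (x : X) (n : ℕ) : Set (ℕ → X) :=
  {s | s 0 = x ∧ ∀ k < n, (s k, s (k + 1)) ∈ G}

section PartialTrajectories

variable {X : Type*} {G : Set (X × X)} {x : X}

lemma partialTrajectories_antitone : Antitone (partialTrajectories G x) :=
  fun _ _ hmn _ hs => ⟨hs.1, fun k hk => hs.2 k (hk.trans_le hmn)⟩

lemma isClosed_partialTrajectories [TopologicalSpace X] [T1Space X] (hG : IsClosed G) (n : ℕ) :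
    IsClosed (partialTrajectories G x n) := by
  simp only [partialTrajectories, ofPred_and, ofPred_forall]
  exact (isClosed_singleton.preimage (continuous_apply 0)).inter <|
    isClosed_iInter fun k => isClosed_iInter fun _ => hG.preimage (by fun_prop)

lemma exists_mem_partialTrajectories_of_mem_relPow :
    ∀ {n : ℕ} {y : X}, (x, y) ∈ relPow G n → ∃ s ∈ partialTrajectories G x n, s n = y
  | 0, _, rfl => ⟨fun _ => x, ⟨rfl, fun _ hk => absurd hk (Nat.not_lt_zero _)⟩, rfl⟩
  | n + 1, y, ⟨z, hxz, hzy⟩ => by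
    obtain ⟨s, ⟨hs0, hs⟩, rfl⟩ := exists_mem_partialTrajectories_of_mem_relPow hxz
    refine ⟨Function.update s (n + 1) y, ⟨?_, fun k hk => ?_⟩, Function.update_self ..⟩
    · rwa [Function.update_of_ne n.succ_ne_zero.symm]
    rcases Nat.lt_succ_iff_lt_or_eq.mp hk with hk | rfl
    · rw [Function.update_of_ne (by omega), Function.update_of_ne (by omega)]
      exact hs k hk
    · rwa [Function.update_of_ne (by omega), Function.update_self]

lemma iInter_partialTrajectories :
    ⋂ n, partialTrajectories G x n = {s | IsTrajectory G x s} := by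
  ext s
  simp only [mem_iInter, partialTrajectories, IsTrajectory, mem_ofPred_eq]
  exact ⟨fun h => ⟨(h 0).1, fun n => (h (n + 1)).2 n n.lt_succ_self⟩,
    fun h _ => ⟨h.1, fun k _ => h.2 k⟩⟩

end PartialTrajectories

lemma IsTrajectory.mem_relPow {X : Type*} {G : Set (X × X)} {x : X} {s : ℕ → X}
    (hs : IsTrajectory G x s) : ∀ n, (x, s n) ∈ relPow G n
  | 0 => hs.1.symm
  | n + 1 => ⟨s n, hs.mem_relPow n, hs.2 n⟩

lemma isLegal_iff_forall_exists_mem_relPow {X : Type*} [TopologicalSpace X] [CompactSpace X]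
    [T1Space X] {G : Set (X × X)} (hG : IsClosed G) (x : X) :
    IsLegal G x ↔ ∀ n, ∃ y, (x, y) ∈ relPow G n := by
  refine ⟨fun ⟨s, hs⟩ n => ⟨s n, hs.mem_relPow n⟩, fun h => ?_⟩
  have hne : (⋂ n, partialTrajectories G x n).Nonempty :=
    IsCompact.nonempty_iInter_of_sequence_nonempty_isCompact_isClosed _
      (fun n => partialTrajectories_antitone n.le_succ)
      (fun n => (h n).elim fun _ hy =>
        (exists_mem_partialTrajectories_of_mem_relPow hy).imp fun _ hs => hs.1)
      (isClosed_partialTrajectories hG 0).isCompact (isClosed_partialTrajectories hG)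
  rwa [iInter_partialTrajectories] at hne

theorem stmt_0_general {X : Type*} [TopologicalSpace X] [CompactSpace X] [T2Space X]
    (G : Set (X × X)) (hGclosed : IsClosed G) (x : X) :
    ¬ IsLegal G x ↔ ∃ n : ℕ, 1 ≤ n ∧ {y : X | (x, y) ∈ relPow G n} = ∅ := by
  rw [isLegal_iff_forall_exists_mem_relPow hGclosed]
  constructor
  · intro h
    push Not at h
    obtain ⟨n, hn⟩ := h
    have hn0 : n ≠ 0 := by
      rintro rfl
      exact hn x rfl
    exact ⟨n, Nat.one_le_iff_ne_zero.2 hn0, eq_empty_iff_forall_notMem.2 hn⟩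
  · rintro ⟨n, -, hn⟩ h
    obtain ⟨y, hy⟩ := h n
    exact hn.subset hy

/-- x is illegal iff Gⁿ(x) = ∅ for some positive n. -/
theorem stmt_0 {X : Type*} [TopologicalSpace X] [CompactSpace X] [T2Space X] [Nonempty X]
    (G : Set (X × X)) (hGclosed : IsClosed G) (hGne : G.Nonempty) (x : X) :
    ¬ IsLegal G x ↔ ∃ n : ℕ, 1 ≤ n ∧ {y : X | (x, y) ∈ relPow G n} = ∅ :=
  stmt_0_general G hGclosed x
end

section
/- Suppose (X, G) and (Y, H) are CR-dynamical systems and φ : X → Y is a homeomorphism such that (x, y) ∈ G if and only if (φ(x), φ(y)) ∈ H. Then for each i, j ∈ {1,2}, if (X, G) has the (i, j)-shadowing property, then (Y, H) has the (i, j)-shadowing property. -/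
open Set Filter Topology

/-!
A conjugacy `φ` carries trajectories, pseudo-orbits and shadowing points of `(X, G)` to those
of `(Y, H)`, and `φ × φ` carries entourages to entourages, since it is a homeomorphism mapping
the diagonal onto the diagonal. So the shadowing data on `X` for the pulled-back entourage
`(φ × φ)⁻¹ U` are pushed forward to shadowing data on `Y` for `U`.
-/

theorem IsEntourage.preimage_prodMap {X Y : Type*} [TopologicalSpace X] [TopologicalSpace Y]
    {f : X → Y} (hf : Continuous f) {U : Set (Y × Y)} (hU : IsEntourage U) :
    IsEntourage (Prod.map f f ⁻¹' U) :=
  (hf.prodMap hf).tendsto_nhdsSet (fun _ h => congrArg f h) hU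

section Conjugacy

variable {X Y : Type*} {G : Set (X × X)} {H : Set (Y × Y)} (e : X ≃ Y)
  (he : ∀ a b, (a, b) ∈ G ↔ (e a, e b) ∈ H)
include he

theorem mem_ndDom_iff_of_conj {x : X} : e x ∈ ndDom H ↔ x ∈ ndDom G := by
  simp only [ndDom, mem_ofPred_eq, e.surjective.exists, he]

theorem isTrajectory_comp_iff_of_conj {x : X} {s : ℕ → X} :
    IsTrajectory H (e x) (e ∘ s) ↔ IsTrajectory G x s := by
  simp only [IsTrajectory, Function.comp_apply, e.injective.eq_iff, he]

theorem isLegal_iff_of_conj {x : X} : IsLegal H (e x) ↔ IsLegal G x := by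
  simp only [IsLegal, e.surjective.comp_left.exists, isTrajectory_comp_iff_of_conj e he]

theorem isPO1_comp_iff_of_conj {U : Set (Y × Y)} {x : ℕ → X} :
    IsPO1 H U (e ∘ x) ↔ IsPO1 G (Prod.map e e ⁻¹' U) x := by
  simp only [IsPO1, Function.comp_apply, mem_ndDom_iff_of_conj e he, e.surjective.forall, ← he,
    mem_preimage, Prod.map]

theorem isPO2_comp_iff_of_conj {U : Set (Y × Y)} {x : ℕ → X} :
    IsPO2 H U (e ∘ x) ↔ IsPO2 G (Prod.map e e ⁻¹' U) x := by
  simp only [IsPO2, Function.comp_apply, mem_ndDom_iff_of_conj e he, e.surjective.exists, ← he,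
    mem_preimage, Prod.map]

theorem shadows1_comp_iff_of_conj {U : Set (Y × Y)} {y : X} {x : ℕ → X} :
    Shadows1 H U (e y) (e ∘ x) ↔ Shadows1 G (Prod.map e e ⁻¹' U) y x := by
  simp only [Shadows1, isLegal_iff_of_conj e he, e.surjective.comp_left.forall,
    isTrajectory_comp_iff_of_conj e he, Function.comp_apply, mem_preimage, Prod.map]

theorem shadows2_comp_iff_of_conj {U : Set (Y × Y)} {y : X} {x : ℕ → X} :
    Shadows2 H U (e y) (e ∘ x) ↔ Shadows2 G (Prod.map e e ⁻¹' U) y x := by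
  simp only [Shadows2, e.surjective.comp_left.exists, isTrajectory_comp_iff_of_conj e he,
    Function.comp_apply, mem_preimage, Prod.map]

end Conjugacy

def ShadowingProperty {X : Type*} [TopologicalSpace X] (IsPO : Set (X × X) → (ℕ → X) → Prop)
    (Shadows : Set (X × X) → X → (ℕ → X) → Prop) : Prop :=
  ∀ U : Set (X × X), IsEntourage U → ∃ V : Set (X × X), IsEntourage V ∧
    ∀ x : ℕ → X, IsPO V x → ∃ y : X, Shadows U y x

theorem ShadowingProperty.of_homeomorph {X Y : Type*} [TopologicalSpace X] [TopologicalSpace Y]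
    (e : X ≃ₜ Y) {POX : Set (X × X) → (ℕ → X) → Prop} {POY : Set (Y × Y) → (ℕ → Y) → Prop}
    {ShX : Set (X × X) → X → (ℕ → X) → Prop} {ShY : Set (Y × Y) → Y → (ℕ → Y) → Prop}
    (hPO : ∀ V x, POY V (e ∘ x) → POX (Prod.map e e ⁻¹' V) x)
    (hSh : ∀ U y x, ShX (Prod.map e e ⁻¹' U) y x → ShY U (e y) (e ∘ x))
    (h : ShadowingProperty POX ShX) : ShadowingProperty POY ShY := by
  intro U hU
  obtain ⟨V, hV, hshadow⟩ := h _ (hU.preimage_prodMap e.continuous)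
  refine ⟨Prod.map e.symm e.symm ⁻¹' V, hV.preimage_prodMap e.symm.continuous, fun x hx => ?_⟩
  have hx_eq : x = e ∘ (e.symm ∘ x) := by ext; simp
  have hpull : Prod.map e e ⁻¹' (Prod.map e.symm e.symm ⁻¹' V) = V := by ext ⟨a, b⟩; simp
  rw [hx_eq] at hx
  obtain ⟨y, hy⟩ := hshadow _ (hpull ▸ hPO _ _ hx)
  exact ⟨e y, hx_eq ▸ hSh U y _ hy⟩

theorem stmt_1_general {X Y : Type*}
    [TopologicalSpace X] [TopologicalSpace Y] (G : Set (X × X)) (H : Set (Y × Y))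
    (φ : X ≃ₜ Y) (hconj : ∀ a b : X, (a, b) ∈ G ↔ (φ a, φ b) ∈ H) :
    (Shadowing11 G → Shadowing11 H) ∧ (Shadowing12 G → Shadowing12 H) ∧
      (Shadowing21 G → Shadowing21 H) ∧ (Shadowing22 G → Shadowing22 H) := by
  have hPO1 := fun V x => (isPO1_comp_iff_of_conj φ.toEquiv hconj (U := V) (x := x)).1
  have hPO2 := fun V x => (isPO2_comp_iff_of_conj φ.toEquiv hconj (U := V) (x := x)).1
  have hSh1 := fun U y x => (shadows1_comp_iff_of_conj φ.toEquiv hconj (U := U) (y := y) (x := x)).2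
  have hSh2 := fun U y x => (shadows2_comp_iff_of_conj φ.toEquiv hconj (U := U) (y := y) (x := x)).2
  exact ⟨ShadowingProperty.of_homeomorph φ hPO1 hSh1, ShadowingProperty.of_homeomorph φ hPO1 hSh2,
    ShadowingProperty.of_homeomorph φ hPO2 hSh1, ShadowingProperty.of_homeomorph φ hPO2 hSh2⟩

/-- the (i,j)-shadowing properties are invariant under topological conjugacy. -/
theorem stmt_1 {X Y : Type*}
    [TopologicalSpace X] [CompactSpace X] [T2Space X] [Nonempty X]
    [TopologicalSpace Y] [CompactSpace Y] [T2Space Y] [Nonempty Y]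
    (G : Set (X × X)) (hGclosed : IsClosed G) (hGne : G.Nonempty)
    (hGpow : ∀ n : ℕ, 1 ≤ n → (relPow G n).Nonempty)
    (H : Set (Y × Y)) (hHclosed : IsClosed H) (hHne : H.Nonempty)
    (hHpow : ∀ n : ℕ, 1 ≤ n → (relPow H n).Nonempty)
    (φ : X ≃ₜ Y) (hconj : ∀ a b : X, (a, b) ∈ G ↔ (φ a, φ b) ∈ H) :
    (Shadowing11 G → Shadowing11 H) ∧ (Shadowing12 G → Shadowing12 H) ∧
      (Shadowing21 G → Shadowing21 H) ∧ (Shadowing22 G → Shadowing22 H) :=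
  stmt_1_general G H φ hconj
end

section
/- Suppose (X, G) and (X, H) are CR-dynamical systems on the same space X such that G ⊆ H and Dom(G) = Dom(H). If (X, G) has the (1,2)-shadowing property, then (X, H) has the (1,2)-shadowing property. -/
open Set Filter Topology

section Monotonicity

variable {X : Type*} {G H V U : Set (X × X)} {x : ℕ → X}

theorem IsTrajectory.mono {y : X} {s : ℕ → X} (hGH : G ⊆ H) (hs : IsTrajectory G y s) :
    IsTrajectory H y s :=
  ⟨hs.1, fun n => hGH (hs.2 n)⟩

theorem Shadows2.mono {y : X} (hGH : G ⊆ H) (hy : Shadows2 G U y x) : Shadows2 H U y x :=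
  let ⟨s, hs, hsx⟩ := hy
  ⟨s, hs.mono hGH, hsx⟩

theorem IsPO1.of_superset (hGH : G ⊆ H) (hdom : ndDom H ⊆ ndDom G) (hx : IsPO1 H V x) :
    IsPO1 G V x :=
  ⟨fun n => hdom (hx.1 n), fun n y hy => hx.2 n y (hGH hy)⟩

end Monotonicity

theorem stmt_3_general {X : Type*} [TopologicalSpace X]
    (G H : Set (X × X))
    (hsub : G ⊆ H) (hdom : ndDom G = ndDom H)
    (hshad : Shadowing12 G) :
    Shadowing12 H := by
  intro U hU
  obtain ⟨V, hV, hVshad⟩ := hshad U hU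
  refine ⟨V, hV, fun x hx => ?_⟩
  obtain ⟨y, hy⟩ := hVshad x (hx.of_superset hsub hdom.ge)
  exact ⟨y, hy.mono hsub⟩

/-- extension lemma for the (1,2)-shadowing property. -/
theorem stmt_3 {X : Type*} [TopologicalSpace X] [CompactSpace X] [T2Space X] [Nonempty X]
    (G H : Set (X × X))
    (hGclosed : IsClosed G) (hGne : G.Nonempty)
    (hGpow : ∀ n : ℕ, 1 ≤ n → (relPow G n).Nonempty)
    (hHclosed : IsClosed H) (hHne : H.Nonempty)
    (hHpow : ∀ n : ℕ, 1 ≤ n → (relPow H n).Nonempty)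
    (hsub : G ⊆ H) (hdom : ndDom G = ndDom H)
    (hshad : Shadowing12 G) :
    Shadowing12 H :=
  stmt_3_general G H hsub hdom hshad
end

section
/- Let (X, G) be a CR-dynamical system and j ∈ {1,2}. Then (X, G) has the (2, j)-shadowing property if and only if (X, Gᵏ) has the (2, j)-shadowing property for every positive integer k. -/
open Set Filter Topology

/-!
A `(V,2)`-pseudo-orbit of `Gᵏ` becomes one of `G` once each `Gᵏ`-step `xₙ → yₙ` is replaced
by a `G`-chain of length `k` from `xₙ` to `yₙ`: the only jumps are `yₙ → xₙ₊₁`, at the ends of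
the blocks. Since `Gᵏ`-trajectories are exactly the samples at multiples of `k` of
`G`-trajectories, a point shadowing the interpolated orbit for `G` shadows the original one
for `Gᵏ`. The converse is the case `k = 1`.
-/

section RelPow

variable {X : Type*}

lemma relPow_one (G : Set (X × X)) : relPow G 1 = G := by
  ext ⟨a, b⟩
  constructor
  · rintro ⟨z, haz, hzb⟩
    rwa [show a = z from haz]
  · exact fun h => ⟨a, rfl, h⟩

lemma mem_relPow_iff_exists_chain (G : Set (X × X)) (k : ℕ) (x y : X) :
    (x, y) ∈ relPow G k ↔
      ∃ c : ℕ → X, c 0 = x ∧ c k = y ∧ ∀ i < k, (c i, c (i + 1)) ∈ G := by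
  induction k generalizing y with
  | zero =>
    constructor
    · intro hxy
      exact ⟨fun _ => x, rfl, hxy, by omega⟩
    · rintro ⟨c, rfl, rfl, -⟩
      rfl
  | succ k ih =>
    constructor
    · rintro ⟨z, hxz, hzy⟩
      obtain ⟨c, hc0, hck, hc⟩ := (ih z).mp hxz
      refine ⟨Function.update c (k + 1) y, by simp [hc0], by simp, fun i hi => ?_⟩
      rcases Nat.lt_succ_iff_lt_or_eq.mp hi with hi | rfl
      · simpa [Function.update_of_ne (by omega : i ≠ k + 1),
          Function.update_of_ne (by omega : i + 1 ≠ k + 1)] using hc i hi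
      · simpa [hck] using hzy
    · rintro ⟨c, hc0, hck, hc⟩
      exact ⟨c k, (ih (c k)).mpr ⟨c, hc0, rfl, fun i hi => hc i (by omega)⟩,
        hck ▸ hc k (by omega)⟩

end RelPow

section BlockConcat

variable {X : Type*} {k : ℕ}

/-- The sequence `c 0 0, …, c 0 (k-1), c 1 0, …, c 1 (k-1), …` of consecutive blocks of length
`k`; the last entry `c n k` of each block is dropped. -/
def blockConcat (k : ℕ) (c : ℕ → ℕ → X) (m : ℕ) : X :=
  c (m / k) (m % k)

lemma blockConcat_mul_add (c : ℕ → ℕ → X) (n : ℕ) {i : ℕ} (hi : i < k) :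
    blockConcat k c (n * k + i) = c n i := by
  have hk : 0 < k := by omega
  rw [blockConcat, Nat.mul_add_mod_of_lt hi, mul_comm, Nat.mul_add_div hk, Nat.div_eq_of_lt hi,
    add_zero]

lemma blockConcat_mul (hk : 0 < k) (c : ℕ → ℕ → X) (n : ℕ) :
    blockConcat k c (n * k) = c n 0 :=
  blockConcat_mul_add c n hk

lemma blockConcat_succ_induction (hk : 0 < k) (c : ℕ → ℕ → X) {P : X → X → Prop}
    (inner : ∀ n i, i + 1 < k → P (c n i) (c n (i + 1)))
    (boundary : ∀ n i, i + 1 = k → P (c n i) (c (n + 1) 0)) (m : ℕ) :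
    P (blockConcat k c m) (blockConcat k c (m + 1)) := by
  obtain ⟨n, i, hi, rfl⟩ : ∃ n i, i < k ∧ m = n * k + i :=
    ⟨m / k, m % k, Nat.mod_lt m hk, (Nat.div_add_mod' m k).symm⟩
  rw [blockConcat_mul_add c n hi]
  rcases (Nat.add_one_le_of_lt hi).lt_or_eq with hi' | hi'
  · rw [add_assoc, blockConcat_mul_add c n hi']
    exact inner n i hi'
  · rw [add_assoc, hi', ← Nat.succ_mul, ← add_zero ((n + 1) * k), blockConcat_mul_add c _ hk]
    exact boundary n i hi'

end BlockConcat

section Trajectory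

variable {X : Type*} {G : Set (X × X)} {k : ℕ}

lemma IsTrajectory.sample (k : ℕ) {y : X} {s : ℕ → X} (hs : IsTrajectory G y s) :
    IsTrajectory (relPow G k) y (fun n => s (n * k)) := by
  refine ⟨by simpa using hs.1, fun n => (mem_relPow_iff_exists_chain G k _ _).mpr
    ⟨fun i => s (n * k + i), rfl, by simp only [add_mul, one_mul], fun i _ => hs.2 _⟩⟩

lemma IsLegal.relPow (k : ℕ) {y : X} (hy : IsLegal G y) : IsLegal (relPow G k) y :=
  let ⟨_, hs⟩ := hy
  ⟨_, hs.sample k⟩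

lemma IsTrajectory.exists_of_relPow (hk : 0 < k) {y : X} {t : ℕ → X}
    (ht : IsTrajectory (relPow G k) y t) :
    ∃ s : ℕ → X, IsTrajectory G y s ∧ ∀ n, s (n * k) = t n := by
  choose c hc0 hck hc using fun n => (mem_relPow_iff_exists_chain G k _ _).mp (ht.2 n)
  refine ⟨blockConcat k c, ⟨?_, blockConcat_succ_induction hk c (P := fun a b => (a, b) ∈ G)
    (fun n i hi => hc n i (by omega))
    (fun n i hi => ?_)⟩, fun n => by rw [blockConcat_mul hk, hc0]⟩
  · rw [← zero_mul k, blockConcat_mul hk, hc0, ht.1]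
  · simpa [hi, hck, hc0] using hc n i (by omega)

lemma IsPO2.exists_of_relPow (hk : 0 < k) {V : Set (X × X)} (hV : Set.diagonal X ⊆ V)
    {x : ℕ → X} (hx : IsPO2 (relPow G k) V x) :
    ∃ z : ℕ → X, IsPO2 G V z ∧ ∀ n, z (n * k) = x n := by
  choose y hxy hyx using hx.2
  choose c hc0 hck hc using fun n => (mem_relPow_iff_exists_chain G k _ _).mp (hxy n)
  refine ⟨blockConcat k c, ⟨fun m => ⟨_, hc _ _ (Nat.mod_lt m hk)⟩, ?_⟩,
    fun n => by rw [blockConcat_mul hk, hc0]⟩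
  refine blockConcat_succ_induction hk c (P := fun a b => ∃ y, (a, y) ∈ G ∧ (y, b) ∈ V)
    (fun n i hi => ⟨_, hc n i (by omega), hV rfl⟩)
    (fun n i hi => ⟨y n, ?_, ?_⟩)
  · simpa [hi, hck] using hc n i (by omega)
  · simpa [hc0] using hyx n

end Trajectory

section Shadowing

variable {X : Type*} [TopologicalSpace X] {G : Set (X × X)} {k : ℕ}

lemma IsEntourage.diagonal_subset {V : Set (X × X)} (hV : IsEntourage V) :
    Set.diagonal X ⊆ V :=
  subset_of_mem_nhdsSet hV

lemma Shadowing21.relPow (hk : 0 < k) (h : Shadowing21 G) : Shadowing21 (relPow G k) := by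
  intro U hU
  obtain ⟨V, hV, hshadow⟩ := h U hU
  refine ⟨V, hV, fun x hx => ?_⟩
  obtain ⟨z, hz, hzx⟩ := hx.exists_of_relPow hk hV.diagonal_subset
  obtain ⟨w, hw, hwz⟩ := hshadow z hz
  refine ⟨w, hw.relPow k, fun t ht n => ?_⟩
  obtain ⟨s, hs, hst⟩ := ht.exists_of_relPow hk
  simpa [hst, hzx] using hwz s hs (n * k)

lemma Shadowing22.relPow (hk : 0 < k) (h : Shadowing22 G) : Shadowing22 (relPow G k) := by
  intro U hU
  obtain ⟨V, hV, hshadow⟩ := h U hU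
  refine ⟨V, hV, fun x hx => ?_⟩
  obtain ⟨z, hz, hzx⟩ := hx.exists_of_relPow hk hV.diagonal_subset
  obtain ⟨w, s, hs, hsz⟩ := hshadow z hz
  exact ⟨w, _, hs.sample k, fun n => by simpa [hzx] using hsz (n * k)⟩

end Shadowing

lemma iff_forall_relPow_of_relPow {X : Type*} {P : Set (X × X) → Prop}
    (hP : ∀ G k, 0 < k → P G → P (relPow G k)) (G : Set (X × X)) :
    P G ↔ ∀ k, 1 ≤ k → P (relPow G k) :=
  ⟨fun h k hk => hP G k hk h, fun h => relPow_one G ▸ h 1 le_rfl⟩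

theorem stmt_6_general {X : Type*} [TopologicalSpace X]
    (G : Set (X × X)) :
    (Shadowing21 G ↔ ∀ k : ℕ, 1 ≤ k → Shadowing21 (relPow G k)) ∧
      (Shadowing22 G ↔ ∀ k : ℕ, 1 ≤ k → Shadowing22 (relPow G k)) :=
  ⟨iff_forall_relPow_of_relPow (fun _ _ hk h => h.relPow hk) G,
    iff_forall_relPow_of_relPow (fun _ _ hk h => h.relPow hk) G⟩

/-- (X,G) has the (2,j)-shadowing property iff (X,Gᵏ) does for all k ≥ 1. -/
theorem stmt_6 {X : Type*} [TopologicalSpace X] [CompactSpace X] [T2Space X] [Nonempty X]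
    (G : Set (X × X)) (hGclosed : IsClosed G) (hGne : G.Nonempty)
    (hGpow : ∀ n : ℕ, 1 ≤ n → (relPow G n).Nonempty) :
    (Shadowing21 G ↔ ∀ k : ℕ, 1 ≤ k → Shadowing21 (relPow G k)) ∧
      (Shadowing22 G ↔ ∀ k : ℕ, 1 ≤ k → Shadowing22 (relPow G k)) :=
  stmt_6_general G
end

section
/- Let (X, G) be a CR-dynamical system. If Dom(G), the set of non-degenerate points of (X, G), is finite, then (X, G) has the (1,1)-shadowing property, the (2,2)-shadowing property, and the (1,2)-shadowing property. -/
/-!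
When `Dom(G)` is finite, an entourage `V` can be chosen so small that `(y, b) ∈ V` with
`b ∈ Dom(G)` forces `y ∉ Dom(G) \ {b}` and forces `b ∈ G(a)` whenever `y ∈ G(a)`: only finitely
many closed sets `Dom(G) \ {b}` and `G(a)` with `b ∉ G(a)` have to be kept away from `b`.
Consequently every `(V, 2)`-pseudo-orbit is itself a trajectory of its initial point, and a
`(V, 1)`-pseudo-orbit is even the only trajectory of its initial point, so it shadows itself.
-/

open Set Filter Topology

section Shadowing

variable {X : Type*} {G U V : Set (X × X)} {x : ℕ → X}

theorem IsEntourage.mk_mem [TopologicalSpace X] (hU : IsEntourage U) (a : X) : (a, a) ∈ U :=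
  subset_of_mem_nhdsSet hU rfl

theorem IsPO1.isPO2 (hx : IsPO1 G V x) : IsPO2 G V x := by
  refine ⟨hx.1, fun n => ?_⟩
  obtain ⟨y, hy⟩ := hx.1 n
  exact ⟨y, hy, hx.2 n y hy⟩

theorem Shadows1.shadows2 {y : X} (h : Shadows1 G U y x) : Shadows2 G U y x := by
  obtain ⟨⟨s, hs⟩, hU⟩ := h
  exact ⟨s, hs, hU s hs⟩

theorem Shadowing11.shadowing12 [TopologicalSpace X] (h : Shadowing11 G) : Shadowing12 G :=
  fun U hU => (h U hU).imp fun _ ⟨hV, hsh⟩ =>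
    ⟨hV, fun x hx => (hsh x hx).imp fun _ => Shadows1.shadows2⟩

theorem shadows2_of_isTrajectory [TopologicalSpace X] (hU : IsEntourage U)
    (hx : IsTrajectory G (x 0) x) : Shadows2 G U (x 0) x :=
  ⟨x, hx, fun n => hU.mk_mem (x n)⟩

theorem shadows1_of_isTrajectory_unique [TopologicalSpace X] (hU : IsEntourage U)
    (hx : IsTrajectory G (x 0) x) (huniq : ∀ s, IsTrajectory G (x 0) s → s = x) :
    Shadows1 G U (x 0) x :=
  ⟨⟨x, hx⟩, fun s hs n => huniq s hs ▸ hU.mk_mem (x n)⟩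

end Shadowing

section FiniteDomain

variable {X : Type*} {G : Set (X × X)}

def forbiddenNear (G : Set (X × X)) (b : X) : Set X :=
  (ndDom G \ {b}) ∪ ⋃ a ∈ ndDom G \ {a | (a, b) ∈ G}, Prod.mk a ⁻¹' G

def finDomEntourage (G : Set (X × X)) : Set (X × X) :=
  (⋃ b ∈ ndDom G, forbiddenNear G b ×ˢ {b})ᶜ

theorem isClosed_forbiddenNear [TopologicalSpace X] [T1Space X] (hG : IsClosed G)
    (hfin : (ndDom G).Finite) (b : X) : IsClosed (forbiddenNear G b) :=
  (hfin.subset sdiff_subset).isClosed.union <| (hfin.subset sdiff_subset).isClosed_biUnion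
    fun a _ => hG.preimage (Continuous.prodMk_right a)

theorem notMem_forbiddenNear_self (b : X) : b ∉ forbiddenNear G b := by
  rintro (⟨-, hb⟩ | hb)
  · exact hb rfl
  · simp only [mem_iUnion] at hb
    obtain ⟨a, ⟨-, hab⟩, hab'⟩ := hb
    exact hab hab'

theorem isEntourage_finDomEntourage [TopologicalSpace X] [T1Space X] (hG : IsClosed G)
    (hfin : (ndDom G).Finite) : IsEntourage (finDomEntourage G) := by
  have hclosed : IsClosed (⋃ b ∈ ndDom G, forbiddenNear G b ×ˢ {b}) :=
    hfin.isClosed_biUnion fun b _ => (isClosed_forbiddenNear hG hfin b).prod isClosed_singleton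
  refine hclosed.isOpen_compl.mem_nhdsSet.mpr ?_
  rintro ⟨y, z⟩ (rfl : y = z) hy
  simp only [mem_iUnion, mem_prod, mem_singleton_iff] at hy
  obtain ⟨b, -, hyb, rfl⟩ := hy
  exact notMem_forbiddenNear_self y hyb

theorem notMem_forbiddenNear_of_mem_finDomEntourage {y b : X} (hb : b ∈ ndDom G)
    (hyb : (y, b) ∈ finDomEntourage G) : y ∉ forbiddenNear G b := fun hy =>
  hyb <| mem_biUnion hb ⟨hy, rfl⟩

theorem eq_of_mem_finDomEntourage {y b : X} (hy : y ∈ ndDom G) (hb : b ∈ ndDom G)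
    (hyb : (y, b) ∈ finDomEntourage G) : y = b := by
  by_contra hne
  exact notMem_forbiddenNear_of_mem_finDomEntourage hb hyb (Or.inl ⟨hy, hne⟩)

theorem mem_of_mem_finDomEntourage {a y b : X} (hay : (a, y) ∈ G) (hb : b ∈ ndDom G)
    (hyb : (y, b) ∈ finDomEntourage G) : (a, b) ∈ G := by
  by_contra hab
  exact notMem_forbiddenNear_of_mem_finDomEntourage hb hyb
    (Or.inr (mem_biUnion ⟨⟨y, hay⟩, hab⟩ hay))

theorem IsPO2.isTrajectory_of_finDomEntourage {x : ℕ → X} (hx : IsPO2 G (finDomEntourage G) x) :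
    IsTrajectory G (x 0) x := by
  refine ⟨rfl, fun n => ?_⟩
  obtain ⟨y, hy, hyx⟩ := hx.2 n
  exact mem_of_mem_finDomEntourage hy (hx.1 (n + 1)) hyx

theorem IsPO1.eq_of_isTrajectory_of_finDomEntourage {x s : ℕ → X}
    (hx : IsPO1 G (finDomEntourage G) x) (hs : IsTrajectory G (x 0) s) : s = x := by
  funext n
  induction n with
  | zero => exact hs.1
  | succ k ih =>
    have hstep : (x k, s (k + 1)) ∈ G := ih ▸ hs.2 k
    exact eq_of_mem_finDomEntourage ⟨s (k + 2), hs.2 (k + 1)⟩ (hx.1 (k + 1)) (hx.2 k _ hstep)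

end FiniteDomain

theorem stmt_8_general {X : Type*} [TopologicalSpace X] [T2Space X]
    (G : Set (X × X)) (hGclosed : IsClosed G)
    (hfin : (ndDom G).Finite) :
    Shadowing11 G ∧ Shadowing22 G ∧ Shadowing12 G := by
  have hV := isEntourage_finDomEntourage hGclosed hfin
  have h11 : Shadowing11 G := fun U hU =>
    ⟨_, hV, fun x hx => ⟨x 0, shadows1_of_isTrajectory_unique hU
      hx.isPO2.isTrajectory_of_finDomEntourage
      fun _ hs => hx.eq_of_isTrajectory_of_finDomEntourage hs⟩⟩
  have h22 : Shadowing22 G := fun U hU =>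
    ⟨_, hV, fun x hx => ⟨x 0, shadows2_of_isTrajectory hU hx.isTrajectory_of_finDomEntourage⟩⟩
  exact ⟨h11, h22, h11.shadowing12⟩

/-- if Dom(G) is finite then (X,G) has the (1,1)-, (2,2)- and
(1,2)-shadowing properties. -/
theorem stmt_8 {X : Type*} [TopologicalSpace X] [CompactSpace X] [T2Space X] [Nonempty X]
    (G : Set (X × X)) (hGclosed : IsClosed G) (hGne : G.Nonempty)
    (hGpow : ∀ n : ℕ, 1 ≤ n → (relPow G n).Nonempty)
    (hfin : (ndDom G).Finite) :
    Shadowing11 G ∧ Shadowing22 G ∧ Shadowing12 G :=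
  stmt_8_general G hGclosed hfin
end

section
/- Let (X, G) be a CR-dynamical system with Dom(G) finite. Then (X, G) has the (2,1)-shadowing property if and only if every legal point of (X, G) has exactly one trajectory. -/
/-!
Since `Dom(G)` is finite, the set of pairs of distinct non-degenerate points is a finite
set off the diagonal, so its complement is an entourage; shadowing a trajectory within it
forces every trajectory of the shadowing point to coincide with that trajectory, which gives
uniqueness. Conversely, for each of the finitely many pairs `(a, b)` of non-degenerate points
with `(a, b) ∉ G`, the closed set `G(a) × {b}` misses the diagonal, so avoiding all of them is
an entourage `V`; a `(V,2)`-pseudo-orbit is then a genuine trajectory, which its initial point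
shadows once trajectories are unique.
-/

open Set Filter Topology

section Development

variable {X : Type*} {G : Set (X × X)}

theorem IsTrajectory.mem_ndDom {x : X} {s : ℕ → X} (hs : IsTrajectory G x s) (n : ℕ) :
    s n ∈ ndDom G :=
  ⟨s (n + 1), hs.2 n⟩

section Entourage

variable [TopologicalSpace X]

theorem IsEntourage.mem {U : Set (X × X)} (hU : IsEntourage U) (x : X) : (x, x) ∈ U :=
  subset_of_mem_nhdsSet hU rfl

theorem isEntourage_compl {K : Set (X × X)} (hK : IsClosed K) (hdiag : ∀ x : X, (x, x) ∉ K) :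
    IsEntourage Kᶜ := by
  refine hK.isOpen_compl.mem_nhdsSet.mpr ?_
  rintro ⟨a, b⟩ (rfl : a = b)
  exact hdiag a

theorem isEntourage_compl_offDiag [T1Space X] {s : Set X} (hs : s.Finite) :
    IsEntourage s.offDiagᶜ :=
  isEntourage_compl hs.offDiag.isClosed fun _ hx => hx.2.2 rfl

theorem IsTrajectory.isPO2 {V : Set (X × X)} {x : X} {s : ℕ → X} (hs : IsTrajectory G x s)
    (hV : IsEntourage V) : IsPO2 G V s :=
  ⟨hs.mem_ndDom, fun n => ⟨s (n + 1), hs.2 n, hV.mem _⟩⟩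

theorem IsTrajectory.shadows1_of_existsUnique {U : Set (X × X)} {x : X} {s : ℕ → X}
    (hs : IsTrajectory G x s) (huniq : ∃! t : ℕ → X, IsTrajectory G x t) (hU : IsEntourage U) :
    Shadows1 G U x s := by
  refine ⟨⟨s, hs⟩, fun t ht n => ?_⟩
  rw [huniq.unique ht hs]
  exact hU.mem _

end Entourage

theorem IsTrajectory.eq_of_shadows1_compl_offDiag {x y : X} {s t : ℕ → X}
    (hs : IsTrajectory G x s) (hy : Shadows1 G (ndDom G).offDiagᶜ y s)
    (ht : IsTrajectory G y t) : t = s := by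
  funext n
  by_contra hne
  exact hy.2 t ht n ⟨ht.mem_ndDom n, hs.mem_ndDom n, hne⟩

/-- Targets `z ∈ G(a)` of a step that a `(V,2)`-pseudo-orbit could take to a non-degenerate `b`
with `(a, b) ∉ G`. -/
def falseStepTargets (G : Set (X × X)) : Set (X × X) :=
  ⋃ q ∈ (ndDom G ×ˢ ndDom G) \ G, {z | (q.1, z) ∈ G} ×ˢ {q.2}

theorem isClosed_falseStepTargets [TopologicalSpace X] [T1Space X] (hG : IsClosed G)
    (hfin : (ndDom G).Finite) : IsClosed (falseStepTargets G) :=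
  (hfin.prod hfin).sdiff.isClosed_biUnion fun q _ =>
    (hG.preimage (Continuous.prodMk_right q.1)).prod isClosed_singleton

theorem diag_notMem_falseStepTargets (x : X) : (x, x) ∉ falseStepTargets G := by
  simp only [falseStepTargets, mem_iUnion]
  rintro ⟨q, hq, hqx, rfl : x = q.2⟩
  exact hq.2 hqx

theorem IsPO2.isTrajectory_of_compl_falseStepTargets {x : ℕ → X}
    (hx : IsPO2 G (falseStepTargets G)ᶜ x) : IsTrajectory G (x 0) x := by
  refine ⟨rfl, fun n => ?_⟩
  by_contra hstep
  obtain ⟨y, hy, hyV⟩ := hx.2 n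
  apply hyV
  simp only [falseStepTargets, mem_iUnion]
  exact ⟨(x n, x (n + 1)), ⟨⟨hx.1 n, hx.1 (n + 1)⟩, hstep⟩, hy, rfl⟩

end Development

theorem stmt_9_general {X : Type*} [TopologicalSpace X] [T2Space X]
    (G : Set (X × X)) (hGclosed : IsClosed G)
    (hfin : (ndDom G).Finite) :
    Shadowing21 G ↔ ∀ x : X, IsLegal G x → ∃! s : ℕ → X, IsTrajectory G x s := by
  constructor
  · rintro hsh x ⟨s, hs⟩
    refine ⟨s, hs, fun t ht => ?_⟩
    obtain ⟨V, hV, hVsh⟩ := hsh _ (isEntourage_compl_offDiag hfin)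
    obtain ⟨y, hy⟩ := hVsh s (hs.isPO2 hV)
    obtain ⟨r, hr⟩ := hy.1
    have hyx : y = x := by
      rw [← hr.1, ← hs.1, hs.eq_of_shadows1_compl_offDiag hy hr]
    subst hyx
    exact hs.eq_of_shadows1_compl_offDiag hy ht
  · intro huniq U hU
    refine ⟨_, isEntourage_compl (isClosed_falseStepTargets hGclosed hfin)
      diag_notMem_falseStepTargets, fun x hx => ⟨x 0, ?_⟩⟩
    have hxtraj := hx.isTrajectory_of_compl_falseStepTargets
    exact hxtraj.shadows1_of_existsUnique (huniq _ ⟨x, hxtraj⟩) hU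

/-- with Dom(G) finite, (X,G) has the (2,1)-shadowing property iff
every legal point has exactly one trajectory. -/
theorem stmt_9 {X : Type*} [TopologicalSpace X] [CompactSpace X] [T2Space X] [Nonempty X]
    (G : Set (X × X)) (hGclosed : IsClosed G) (hGne : G.Nonempty)
    (hGpow : ∀ n : ℕ, 1 ≤ n → (relPow G n).Nonempty)
    (hfin : (ndDom G).Finite) :
    Shadowing21 G ↔ ∀ x : X, IsLegal G x → ∃! s : ℕ → X, IsTrajectory G x s :=
  stmt_9_general G hGclosed hfin
end

section
/- Let (X, G) be a CR-dynamical system such that Gⁿ = Δ_X for some positive integer n, where Δ_X = {(x,x) : x ∈ X}. Then there exists a continuous self-map f : X → X such that G = {(x, f(x)) : x ∈ X}. -/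
open Set Filter Topology

theorem relPow_succ_iff_left {X : Type*} (G : Set (X × X)) (n : ℕ) (p : X × X) :
    p ∈ relPow G (n + 1) ↔ ∃ z : X, (p.1, z) ∈ G ∧ (z, p.2) ∈ relPow G n := by
  induction n generalizing p with
  | zero =>
    constructor
    · rintro ⟨z, hpz, hz⟩
      cases hpz
      exact ⟨p.2, hz, rfl⟩
    · rintro ⟨z, hz, hzp⟩
      cases hzp
      exact ⟨p.1, rfl, hz⟩
  | succ m ih =>
    constructor
    · rintro ⟨z, hz, hzp⟩
      obtain ⟨w, hw, hwz⟩ := (ih (p.1, z)).mp hz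
      exact ⟨w, hw, z, hwz, hzp⟩
    · rintro ⟨z, hz, w, hw, hwp⟩
      exact ⟨w, (ih (p.1, w)).mpr ⟨z, hz, hw⟩, hwp⟩

/-- Writing `Gⁿ⁺¹ = G ∘ Gⁿ = Gⁿ ∘ G`: the first factorisation of `(x, x)` gives a successor
of `x`, the second forces any two successors `y`, `z` of `x` to satisfy `(z, y) ∈ Gⁿ⁺¹ = Δ`. -/
theorem existsUnique_mem_of_relPow_succ_eq_diagonal {X : Type*} {G : Set (X × X)} {n : ℕ}
    (hdiag : relPow G (n + 1) = Set.diagonal X) (x : X) : ∃! y : X, (x, y) ∈ G := by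
  have hxx : (x, x) ∈ relPow G (n + 1) := hdiag ▸ Set.mem_diagonal x
  obtain ⟨z, hxz, hzx⟩ := (relPow_succ_iff_left G n (x, x)).mp hxx
  refine ⟨z, hxz, fun y hxy => ?_⟩
  have hzy : (z, y) ∈ relPow G (n + 1) := ⟨x, hzx, hxy⟩
  rw [hdiag] at hzy
  exact hzy.symm

theorem continuous_of_isClosed_graph {X Y : Type*} [TopologicalSpace X] [TopologicalSpace Y]
    [CompactSpace Y] {f : X → Y} (hf : IsClosed {p : X × Y | p.2 = f p.1}) : Continuous f := by
  rw [continuous_iff_isClosed]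
  intro C hC
  have hpre : f ⁻¹' C = Prod.fst '' ({p : X × Y | p.2 = f p.1} ∩ Prod.snd ⁻¹' C) := by
    ext x
    constructor
    · intro hx
      exact ⟨(x, f x), ⟨rfl, hx⟩, rfl⟩
    · rintro ⟨⟨a, b⟩, ⟨hab, hb⟩, rfl⟩
      exact (show b = f a from hab) ▸ hb
  rw [hpre]
  exact isClosedMap_fst_of_compactSpace _ (hf.inter (hC.preimage continuous_snd))

theorem stmt_10_general {X : Type*} [TopologicalSpace X] [CompactSpace X]
    (G : Set (X × X)) (hGclosed : IsClosed G)
    (n : ℕ) (hn : 1 ≤ n) (hdiag : relPow G n = Set.diagonal X) :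
    ∃ f : X → X, Continuous f ∧ G = {p : X × X | p.2 = f p.1} := by
  obtain ⟨m, rfl⟩ : ∃ m, n = m + 1 := ⟨n - 1, by omega⟩
  choose f hf hf_unique using existsUnique_mem_of_relPow_succ_eq_diagonal hdiag
  have hG : G = {p : X × X | p.2 = f p.1} := by
    ext ⟨a, b⟩
    exact ⟨hf_unique a b, fun hb : b = f a => hb ▸ hf a⟩
  exact ⟨f, continuous_of_isClosed_graph (hG ▸ hGclosed), hG⟩

/-- if Gⁿ = Δ_X for some positive n then G is the graph of a
continuous self-map. -/
theorem stmt_10 {X : Type*} [TopologicalSpace X] [CompactSpace X] [T2Space X] [Nonempty X]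
    (G : Set (X × X)) (hGclosed : IsClosed G) (hGne : G.Nonempty)
    (hGpow : ∀ n : ℕ, 1 ≤ n → (relPow G n).Nonempty)
    (n : ℕ) (hn : 1 ≤ n) (hdiag : relPow G n = Set.diagonal X) :
    ∃ f : X → X, Continuous f ∧ G = {p : X × X | p.2 = f p.1} :=
  stmt_10_general G hGclosed n hn hdiag
end

section
/- Suppose (X, G) is a CR-dynamical system with Δ_X ⊆ G. Then: (1) if (X, G) has the (2,1)-shadowing property, then X is totally disconnected; (2) if X is totally disconnected, then (X, G) has the (1,2)-shadowing property. -/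
/-!
Since `G` contains the diagonal, every `V`-chain, padded to a sequence, is a pseudo-orbit of either
kind, and every point has the constant trajectory. In a preconnected set any two points are joined
by a `V`-chain (the points reachable from one of them form a clopen set), so a point that
`(U,1)`-shadows such a chain is `U`-close to both ends; choosing `U` to separate two distinct
points shows that preconnected sets are subsingletons. Conversely, a compact totally disconnected
space has a finite cover by disjoint clopens that are `U`-small, and the associated equivalence
relation `V` is an open neighbourhood of the diagonal: a `(V,1)`-pseudo-orbit never leaves the
clopen piece of its initial point, so the constant trajectory of that point `U`-shadows it.
-/

open Set Filter Topology

open Relation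

theorem Relation.ReflTransGen.exists_seq {α : Type*} {r : α → α → Prop} {a b : α}
    (h : ReflTransGen r a b) (hr : ∀ x, r x x) :
    ∃ (c : ℕ → α) (N : ℕ), c 0 = a ∧ c N = b ∧ ∀ n, r (c n) (c (n + 1)) := by
  induction h using ReflTransGen.head_induction_on with
  | refl => exact ⟨fun _ => b, 0, rfl, rfl, fun _ => hr b⟩
  | @head a a' haa' _ ih =>
    obtain ⟨c, N, hc0, hcN, hc⟩ := ih
    refine ⟨fun | 0 => a | n + 1 => c n, N + 1, rfl, hcN, fun n => ?_⟩
    cases n with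
    | zero => show r a (c 0); rwa [hc0]
    | succ n => exact hc n

section Topology

variable {X : Type*} [TopologicalSpace X]

theorem IsPreconnected.reflTransGen_of_mem_nhdsSet_diagonal {V : Set (X × X)}
    (hV : V ∈ 𝓝ˢ (diagonal X)) {t : Set X} (ht : IsPreconnected t) {a b : X}
    (ha : a ∈ t) (hb : b ∈ t) : ReflTransGen (fun p q => (p, q) ∈ V) a b := by
  have hV' : ∀ z, V ∈ 𝓝 (z, z) := fun z => mem_nhdsSet_iff_forall.1 hV (z, z) rfl
  set R := {z | ReflTransGen (fun p q => (p, q) ∈ V) a z}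
  have hR : IsOpen R := isOpen_iff_mem_nhds.2 fun z hz =>
    mem_of_superset ((Continuous.prodMk_right z).continuousAt.preimage_mem_nhds (hV' z))
      fun _ hw => hz.tail hw
  have hRc : IsOpen Rᶜ := isOpen_iff_mem_nhds.2 fun z hz =>
    mem_of_superset ((Continuous.prodMk_left z).continuousAt.preimage_mem_nhds (hV' z))
      fun _ hw hwR => hz (hwR.tail hw)
  exact ht.subset_isClopen ⟨isOpen_compl_iff.1 hRc, hR⟩ ⟨a, ha, .refl⟩ hb

theorem exists_mem_nhdsSet_diagonal_of_ne [T2Space X] {a b : X} (hab : a ≠ b) :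
    ∃ U ∈ 𝓝ˢ (diagonal X), ∀ y, (y, a) ∈ U → (y, b) ∉ U := by
  obtain ⟨A, B, hA, hB, haA, hbB, hAB⟩ := t2_separation hab
  refine ⟨(Aᶜ ×ˢ {a})ᶜ ∩ (Bᶜ ×ˢ {b})ᶜ, ?_, fun y hya hyb => ?_⟩
  · refine (IsOpen.inter ?_ ?_).mem_nhdsSet.2 ?_
    · exact (hA.isClosed_compl.prod isClosed_singleton).isOpen_compl
    · exact (hB.isClosed_compl.prod isClosed_singleton).isOpen_compl
    · rintro ⟨z, _⟩ (rfl : z = _)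
      exact ⟨fun ⟨hzA, (hza : z = a)⟩ => hzA (hza ▸ haA),
        fun ⟨hzB, (hzb : z = b)⟩ => hzB (hzb ▸ hbB)⟩
  have hyA : y ∈ A := not_not.1 fun h => hya.1 ⟨h, rfl⟩
  have hyB : y ∈ B := not_not.1 fun h => hyb.2 ⟨h, rfl⟩
  exact disjoint_left.1 hAB hyA hyB

theorem exists_isTrans_mem_nhdsSet_diagonal_subset [CompactSpace X] [T2Space X]
    [TotallyDisconnectedSpace X] {U : Set (X × X)} (hU : U ∈ 𝓝ˢ (diagonal X)) :
    ∃ V ∈ 𝓝ˢ (diagonal X), V ⊆ U ∧ SetRel.IsTrans V := by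
  obtain ⟨n, D, -, hDU, hDcover, hDdisj⟩ :=
    (ContinuousMap.id X).exists_disjoint_nonempty_clopen_cover_of_mem_nhds_diagonal hU
  refine ⟨⋃ i, (D i : Set X) ×ˢ D i, ?_, ?_, ⟨?_⟩⟩
  · refine (isOpen_iUnion fun i => (D i).isOpen.prod (D i).isOpen).mem_nhdsSet.2 ?_
    rintro ⟨x, _⟩ (rfl : x = _)
    obtain ⟨i, hi⟩ := mem_iUnion.1 (hDcover (mem_univ x))
    exact mem_iUnion.2 ⟨i, hi, hi⟩
  · exact iUnion_subset fun i ⟨p, q⟩ ⟨hp, hq⟩ => hDU i p hp q hq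
  · intro p q r hpq hqr
    obtain ⟨i, hpi, hqi⟩ := mem_iUnion.1 hpq
    obtain ⟨j, hqj, hrj⟩ := mem_iUnion.1 hqr
    obtain rfl : i = j := by_contra fun hij =>
      (TopologicalSpace.Clopens.coe_disjoint.2 (hDdisj hij)).ne_of_mem hqi hqj rfl
    exact mem_iUnion.2 ⟨i, hpi, hrj⟩

end Topology

theorem isTrajectory_const {X : Type*} {G : Set (X × X)} (hdiag : diagonal X ⊆ G) (x : X) :
    IsTrajectory G x fun _ => x :=
  ⟨rfl, fun _ => hdiag rfl⟩

section Shadowing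

variable {X : Type*} [TopologicalSpace X] {G : Set (X × X)}

theorem totallyDisconnectedSpace_of_shadowing21 [T2Space X] (hdiag : diagonal X ⊆ G)
    (hG : Shadowing21 G) : TotallyDisconnectedSpace X := by
  refine ⟨fun t _ ht a ha b hb => by_contra fun hab => ?_⟩
  obtain ⟨U, hU, hUab⟩ := exists_mem_nhdsSet_diagonal_of_ne hab
  obtain ⟨V, hV, hVshadow⟩ := hG U hU
  obtain ⟨c, N, hc0, hcN, hcV⟩ := (ht.reflTransGen_of_mem_nhdsSet_diagonal hV ha hb).exists_seq
    fun x => subset_of_mem_nhdsSet hV rfl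
  obtain ⟨y, -, hy⟩ := hVshadow c ⟨fun n => ⟨c n, hdiag rfl⟩, fun n => ⟨c n, hdiag rfl, hcV n⟩⟩
  have hyc := hy _ (isTrajectory_const hdiag y)
  exact hUab y (hc0 ▸ hyc 0) (hcN ▸ hyc N)

theorem shadowing12_of_totallyDisconnectedSpace [CompactSpace X] [T2Space X]
    [TotallyDisconnectedSpace X] (hdiag : diagonal X ⊆ G) : Shadowing12 G := by
  intro U hU
  obtain ⟨V, hV, hVU, _⟩ := exists_isTrans_mem_nhdsSet_diagonal_subset hU
  refine ⟨V, hV, fun x hx => ⟨x 0, _, isTrajectory_const hdiag _, fun n => hVU ?_⟩⟩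
  induction n with
  | zero => exact subset_of_mem_nhdsSet hV rfl
  | succ n ih => exact SetRel.trans V ih (hx.2 n (x n) (hdiag rfl))

end Shadowing

theorem stmt_11_general {X : Type*} [TopologicalSpace X] [CompactSpace X] [T2Space X]
    (G : Set (X × X))
    (hdiag : Set.diagonal X ⊆ G) :
    (Shadowing21 G → TotallyDisconnectedSpace X) ∧
      (TotallyDisconnectedSpace X → Shadowing12 G) :=
  ⟨totallyDisconnectedSpace_of_shadowing21 hdiag,
    fun _ => shadowing12_of_totallyDisconnectedSpace hdiag⟩

/-- for Δ_X ⊆ G: (2,1)-shadowing implies X totally disconnected, and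
X totally disconnected implies (1,2)-shadowing. -/
theorem stmt_11 {X : Type*} [TopologicalSpace X] [CompactSpace X] [T2Space X] [Nonempty X]
    (G : Set (X × X)) (hGclosed : IsClosed G) (hGne : G.Nonempty)
    (hGpow : ∀ n : ℕ, 1 ≤ n → (relPow G n).Nonempty)
    (hdiag : Set.diagonal X ⊆ G) :
    (Shadowing21 G → TotallyDisconnectedSpace X) ∧
      (TotallyDisconnectedSpace X → Shadowing12 G) :=
  stmt_11_general G hdiag
end

section
/- Let (X, G) be a CR-dynamical system such that G = Δ_X ∪ (X × {x}) for some point x ∈ X, where Δ_X = {(z,z) : z ∈ X}. Then (X, G) has the (1,1)-shadowing property. -/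
open Set Filter Topology

open scoped Uniformity

/-!
Shadow a `(V,1)`-pseudo-orbit `z` by its own initial point `z 0`. Every trajectory of `z 0` only
takes the values `z 0` and `x`, since `G` lets a point stay put or jump to `x`. As `z n` and `x`
both lie in `G (z n)`, the pseudo-orbit condition puts `z (n + 1)` `V`-close to `z n` and to `x`;
hence `x` is `V`-close to every `z (n + 1)` and `z 0` is `V ○ V ○ V`-close to every `z (n + 1)`,
via `z 0 ~ z 1 ~ x ~ z (n + 1)`.
-/

lemma isEntourage_iff_mem_uniformity {X : Type*} [UniformSpace X] [CompactSpace X]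
    {U : Set (X × X)} : IsEntourage U ↔ U ∈ 𝓤 X := by
  rw [IsEntourage, nhdsSet_diagonal_eq_uniformity]

lemma isLegal_of_diagonal_subset {X : Type*} {G : Set (X × X)} (hG : diagonal X ⊆ G) (y : X) :
    IsLegal G y :=
  ⟨fun _ => y, rfl, fun _ => hG rfl⟩

lemma IsTrajectory.eq_or_eq_of_subset_diagonal_union {X : Type*} {G : Set (X × X)} {x y : X}
    {s : ℕ → X} (hG : G ⊆ diagonal X ∪ univ ×ˢ {x}) (hs : IsTrajectory G y s) (n : ℕ) :
    s n = y ∨ s n = x := by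
  induction n with
  | zero => exact Or.inl hs.1
  | succ n ih =>
    rcases hG (hs.2 n) with hstay | ⟨-, hjump⟩
    · rw [← show s n = s (n + 1) from hstay]
      exact ih
    · exact Or.inr hjump

theorem shadowing11_diagonal_union_univ_prod_singleton {X : Type*} [UniformSpace X]
    [CompactSpace X] (x : X) : Shadowing11 (diagonal X ∪ univ ×ˢ ({x} : Set X)) := by
  intro U hU
  rw [isEntourage_iff_mem_uniformity] at hU
  obtain ⟨V, hV, hVsymm, hVU⟩ := comp_comp_symm_mem_uniformity_sets hU
  have hV_sub_U : V ⊆ U := fun p hp =>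
    hVU ⟨p.2, ⟨p.2, hp, refl_mem_uniformity hV⟩, refl_mem_uniformity hV⟩
  refine ⟨V, isEntourage_iff_mem_uniformity.2 hV, fun z hz => ?_⟩
  have hx_near : ∀ n, (x, z (n + 1)) ∈ V := fun n => hz.2 n x (Or.inr ⟨mem_univ _, rfl⟩)
  have hz_near : (z 0, z 1) ∈ V := hz.2 0 (z 0) (Or.inl rfl)
  refine ⟨z 0, isLegal_of_diagonal_subset subset_union_left _, fun s hs n => ?_⟩
  rcases n with _ | n
  · rw [hs.1]
    exact refl_mem_uniformity hU
  rcases hs.eq_or_eq_of_subset_diagonal_union subset_rfl (n + 1) with h | h <;> rw [h]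
  · exact hVU ⟨x, ⟨z 1, hz_near, SetRel.symm V (hx_near 0)⟩, hx_near n⟩
  · exact hV_sub_U (hx_near n)

theorem stmt_12_general {X : Type*} [TopologicalSpace X] [CompactSpace X] [T2Space X]
    (G : Set (X × X))
    (x : X) (hG : G = Set.diagonal X ∪ Set.univ ×ˢ ({x} : Set X)) :
    Shadowing11 G := by
  let _ : UniformSpace X := uniformSpaceOfCompactR1
  subst hG
  exact shadowing11_diagonal_union_univ_prod_singleton x

/-- if G = Δ_X ∪ (X × {x}) then (X,G) has the (1,1)-shadowing property. -/
theorem stmt_12 {X : Type*} [TopologicalSpace X] [CompactSpace X] [T2Space X] [Nonempty X]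
    (G : Set (X × X)) (hGclosed : IsClosed G) (hGne : G.Nonempty)
    (hGpow : ∀ n : ℕ, 1 ≤ n → (relPow G n).Nonempty)
    (x : X) (hG : G = Set.diagonal X ∪ Set.univ ×ˢ ({x} : Set X)) :
    Shadowing11 G :=
  stmt_12_general G x hG
end

section
/- Let (X, G) be a CR-dynamical system on a non-empty compact metric space (X, d), such that there exists an isometry f : X → X with {(x, f(x)) : x ∈ X} ⊆ G. Then X is totally disconnected if and only if the infinite Mahavier product X_G⁺ = {(xₙ)_{n≥0} ∈ Xᵚ : (xₙ, xₙ₊₁) ∈ G for all n}, with the subspace topology inherited from the product topology on Xᵚ, is totally disconnected. -/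
open Set

/-- `(δ,1)`-pseudo-orbit. -/
def MPO1 {X : Type*} [MetricSpace X] (G : Set (X × X)) (δ : ℝ) (x : ℕ → X) : Prop :=
  (∀ n : ℕ, x n ∈ ndDom G) ∧ ∀ n : ℕ, ∀ y : X, (x n, y) ∈ G → dist y (x (n + 1)) ≤ δ

/-- `(δ,2)`-pseudo-orbit. -/
def MPO2 {X : Type*} [MetricSpace X] (G : Set (X × X)) (δ : ℝ) (x : ℕ → X) : Prop :=
  (∀ n : ℕ, x n ∈ ndDom G) ∧ ∀ n : ℕ, ∃ y : X, (x n, y) ∈ G ∧ dist y (x (n + 1)) ≤ δ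

/-- The legal point `y` `(ε,1)`-shadows the sequence `x`. -/
def MShadows1 {X : Type*} [MetricSpace X] (G : Set (X × X)) (ε : ℝ) (y : X) (x : ℕ → X) : Prop :=
  IsLegal G y ∧ ∀ s : ℕ → X, IsTrajectory G y s → ∀ n : ℕ, dist (x n) (s n) < ε

/-- The point `y` `(ε,2)`-shadows the sequence `x`. -/
def MShadows2 {X : Type*} [MetricSpace X] (G : Set (X × X)) (ε : ℝ) (y : X) (x : ℕ → X) : Prop :=
  ∃ s : ℕ → X, IsTrajectory G y s ∧ ∀ n : ℕ, dist (x n) (s n) < ε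

/-- The `(2,1)`-shadowing property (metric form). -/
def MShadowing21 {X : Type*} [MetricSpace X] (G : Set (X × X)) : Prop :=
  ∀ ε : ℝ, 0 < ε → ∃ δ : ℝ, 0 < δ ∧
    ∀ x : ℕ → X, MPO2 G δ x → ∃ y : X, MShadows1 G ε y x

/-- The `(1,2)`-shadowing property (metric form). -/
def MShadowing12 {X : Type*} [MetricSpace X] (G : Set (X × X)) : Prop :=
  ∀ ε : ℝ, 0 < ε → ∃ δ : ℝ, 0 < δ ∧
    ∀ x : ℕ → X, MPO1 G δ x → ∃ y : X, MShadows2 G ε y x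

theorem Function.Injective.totallyDisconnectedSpace {α β : Type*} [TopologicalSpace α]
    [TopologicalSpace β] [TotallyDisconnectedSpace β] {f : α → β} (hinj : Function.Injective f)
    (hf : Continuous f) : TotallyDisconnectedSpace α :=
  (totallyDisconnectedSpace_iff α).2 <| isTotallyDisconnected_of_image hf.continuousOn hinj
    (isTotallyDisconnected_of_totallyDisconnectedSpace _)

section OrbitTrajectory

variable {X : Type*} {G : Set (X × X)} {f : X → X}

def orbitTrajectory (hgraph : ∀ x, (x, f x) ∈ G) (x : X) :
    {s : ℕ → X // ∀ n : ℕ, (s n, s (n + 1)) ∈ G} :=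
  ⟨fun n => f^[n] x, fun n => by
    simpa only [Function.iterate_succ_apply'] using hgraph (f^[n] x)⟩

theorem orbitTrajectory_injective (hgraph : ∀ x, (x, f x) ∈ G) :
    Function.Injective (orbitTrajectory hgraph) :=
  fun _ _ h => congrArg (fun s => s.1 0) h

theorem continuous_orbitTrajectory [TopologicalSpace X] (hgraph : ∀ x, (x, f x) ∈ G)
    (hf : Continuous f) : Continuous (orbitTrajectory hgraph) :=
  (continuous_pi fun n => hf.iterate n).subtype_mk _

end OrbitTrajectory

/-- The orbit map of the isometry is a continuous injection `X → X_G⁺`; the converse direction holds because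
`X_G⁺` is a subspace of the totally disconnected product `∏ X`. -/
theorem stmt_19_general {X : Type*} [MetricSpace X]
    (G : Set (X × X))
    (f : X → X) (hf : ∀ x y : X, dist (f x) (f y) = dist x y)
    (hgraph : {p : X × X | p.2 = f p.1} ⊆ G) :
    TotallyDisconnectedSpace X ↔
      TotallyDisconnectedSpace {s : ℕ → X // ∀ n : ℕ, (s n, s (n + 1)) ∈ G} := by
  refine ⟨fun _ => inferInstance, fun _ => ?_⟩
  have hgraph' : ∀ x, (x, f x) ∈ G := fun x => hgraph rfl
  exact (orbitTrajectory_injective hgraph').totallyDisconnectedSpace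
    (continuous_orbitTrajectory hgraph' (Isometry.of_dist_eq hf).continuous)

/-- for a CR-dynamical system on a compact metric space whose relation
contains the graph of an isometry, X is totally disconnected iff the infinite
Mahavier product X_G⁺ is totally disconnected. -/
theorem stmt_19 {X : Type*} [MetricSpace X] [CompactSpace X] [Nonempty X]
    (G : Set (X × X)) (hGclosed : IsClosed G) (hGne : G.Nonempty)
    (hGpow : ∀ n : ℕ, 1 ≤ n → (relPow G n).Nonempty)
    (f : X → X) (hf : ∀ x y : X, dist (f x) (f y) = dist x y)
    (hgraph : {p : X × X | p.2 = f p.1} ⊆ G) :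
    TotallyDisconnectedSpace X ↔
      TotallyDisconnectedSpace {s : ℕ → X // ∀ n : ℕ, (s n, s (n + 1)) ∈ G} :=
  stmt_19_general G f hf hgraph
end
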